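/- If f(x) = (⟨a, x⟩ + b)^+ for fixed a ∈ ℝ^d and b ∈ ℝ (where z^+ := max(z,0)), then for every x ∈ ℝ^d one has g^A(x) = (⟨a, x⟩ + b + (√A/2)·⟨aσ, a⟩)^+. -/

import Mathlib

open MeasureTheory ProbabilityTheory Matrix Filter

noncomputable section

/-- Euclidean inner product on row vectors in `ℝ^d`. -/
def euclInner {d : ℕ} (x y : Fin d → ℝ) : ℝ := ∑ i, x i * y i

/-- Euclidean norm on row vectors in `ℝ^d`. -/
def euclNorm {d : ℕ} (x : Fin d → ℝ) : ℝ := Real.sqrt (∑ i, (x i) ^ 2)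

/-- `g^A(x) := sup_y [ f(x+y) − ⟨yσ⁻¹, y⟩/(2√A) ]`. -/
def gA {d : ℕ} (A : ℝ) (σ : Matrix (Fin d) (Fin d) ℝ) (f : (Fin d → ℝ) → ℝ)
    (x : Fin d → ℝ) : ℝ :=
  sSup {r | ∃ y : Fin d → ℝ, r = f (x + y) - euclInner (y ᵥ* σ⁻¹) y / (2 * Real.sqrt A)}

/-! Completing the square, `⟨a, y⟩ - ⟨yσ⁻¹, y⟩/(2t) = (t/2)⟨aσ, a⟩ - ⟨zσ⁻¹, z⟩/(2t)` with
`z = y - t·aσ` and `t = √A`, shows that the linear part of the objective is maximised at `y = t·aσ`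
and the zero part at `y = 0`. Since `max(u, 0) - q = max(u - q, -q)`, the supremum defining `g^A`
is the maximum of these two attained suprema. -/

open Set

namespace Matrix

variable {n : Type*} [Fintype n] [DecidableEq n] {σ : Matrix n n ℝ}

lemma PosDef.vecMul_inv_dotProduct_self_nonneg (hσ : σ.PosDef) (z : n → ℝ) :
    0 ≤ (z ᵥ* σ⁻¹) ⬝ᵥ z := by
  simpa [dotProduct_mulVec] using hσ.inv.posSemidef.dotProduct_mulVec_nonneg z

lemma IsHermitian.vecMul_inv_dotProduct_sub_smul_vecMul (hσ : σ.IsHermitian)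
    (hdet : IsUnit σ.det) (t : ℝ) (a y : n → ℝ) :
    ((y - t • (a ᵥ* σ)) ᵥ* σ⁻¹) ⬝ᵥ (y - t • (a ᵥ* σ))
      = (y ᵥ* σ⁻¹) ⬝ᵥ y - 2 * t * (a ⬝ᵥ y) + t ^ 2 * ((a ᵥ* σ) ⬝ᵥ a) := by
  have hinv : σ⁻¹ᵀ = σ⁻¹ := by simpa [IsHermitian] using hσ.inv
  have hcancel : (a ᵥ* σ) ᵥ* σ⁻¹ = a := by
    rw [vecMul_vecMul, mul_nonsing_inv _ hdet, vecMul_one]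
  have hcross : (y ᵥ* σ⁻¹) ⬝ᵥ (a ᵥ* σ) = a ⬝ᵥ y := by
    rw [← dotProduct_mulVec, ← vecMul_transpose, hinv, hcancel, dotProduct_comm]
  rw [sub_vecMul, smul_vecMul, hcancel]
  simp only [sub_dotProduct, dotProduct_sub, smul_dotProduct, dotProduct_smul, smul_eq_mul, hcross]
  rw [dotProduct_comm a (a ᵥ* σ)]
  ring

lemma PosDef.dotProduct_sub_vecMul_inv_dotProduct_eq (hσ : σ.PosDef) {t : ℝ} (ht : t ≠ 0)
    (a y : n → ℝ) :
    a ⬝ᵥ y - (y ᵥ* σ⁻¹) ⬝ᵥ y / (2 * t)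
      = t / 2 * ((a ᵥ* σ) ⬝ᵥ a)
        - ((y - t • (a ᵥ* σ)) ᵥ* σ⁻¹) ⬝ᵥ (y - t • (a ᵥ* σ)) / (2 * t) := by
  rw [hσ.isHermitian.vecMul_inv_dotProduct_sub_smul_vecMul hσ.det_pos.ne'.isUnit]
  field_simp
  ring

lemma PosDef.isGreatest_range_add_dotProduct_sub_vecMul_inv_dotProduct (hσ : σ.PosDef)
    {t : ℝ} (ht : 0 < t) (c : ℝ) (a : n → ℝ) :
    IsGreatest (range fun y => c + a ⬝ᵥ y - (y ᵥ* σ⁻¹) ⬝ᵥ y / (2 * t))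
      (c + t / 2 * ((a ᵥ* σ) ⬝ᵥ a)) := by
  simp_rw [add_sub_assoc, hσ.dotProduct_sub_vecMul_inv_dotProduct_eq ht.ne']
  refine ⟨⟨t • (a ᵥ* σ), by simp⟩, ?_⟩
  rintro _ ⟨y, rfl⟩
  have := hσ.vecMul_inv_dotProduct_self_nonneg (y - t • (a ᵥ* σ))
  dsimp only
  gcongr
  exact sub_le_self _ (div_nonneg this (by positivity))

end Matrix

lemma isGreatest_range_max {ι α : Type*} [LinearOrder α] {f g : ι → α} {a b : α}
    (hf : IsGreatest (range f) a) (hg : IsGreatest (range g) b) :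
    IsGreatest (range fun i => max (f i) (g i)) (max a b) := by
  refine ⟨?_, ?_⟩
  · rcases le_total a b with hab | hba
    · obtain ⟨i, hi⟩ := hg.1
      have hfi : f i ≤ g i := (hf.2 ⟨i, rfl⟩).trans (hi ▸ hab)
      exact ⟨i, by dsimp only; rw [max_eq_right hfi, hi, max_eq_right hab]⟩
    · obtain ⟨i, hi⟩ := hf.1
      have hgi : g i ≤ f i := (hg.2 ⟨i, rfl⟩).trans (hi ▸ hba)
      exact ⟨i, by dsimp only; rw [max_eq_left hgi, hi, max_eq_left hba]⟩
  · rintro _ ⟨i, rfl⟩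
    exact max_le_max (hf.2 ⟨i, rfl⟩) (hg.2 ⟨i, rfl⟩)

theorem stmt4 {d : ℕ} (σ : Matrix (Fin d) (Fin d) ℝ) (hσ : σ.PosDef)
    (A : ℝ) (hA : 0 < A) (a : Fin d → ℝ) (b : ℝ) :
    ∀ x : Fin d → ℝ,
      gA A σ (fun z => max (euclInner a z + b) 0) x
        = max (euclInner a x + b + (Real.sqrt A / 2) * euclInner (a ᵥ* σ) a) 0 := by
  intro x
  have ht : 0 < Real.sqrt A := Real.sqrt_pos.mpr hA
  have hmax := isGreatest_range_max
    (hσ.isGreatest_range_add_dotProduct_sub_vecMul_inv_dotProduct ht (a ⬝ᵥ x + b) a)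
    (hσ.isGreatest_range_add_dotProduct_sub_vecMul_inv_dotProduct ht 0 0)
  simp only [zero_dotProduct, zero_vecMul, mul_zero, add_zero] at hmax
  have heucl : ∀ u v : Fin d → ℝ, euclInner u v = u ⬝ᵥ v := fun _ _ => rfl
  simp only [gA, heucl]
  rw [← hmax.csSup_eq]
  congr 1
  ext r
  simp only [dotProduct_add, max_sub_sub_right, add_right_comm _ (a ⬝ᵥ _) b, mem_ofPred_eq,
    mem_range, eq_comm]
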